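/- arXiv:1710.11205 — 9 statements merged into one kernel-verified Lean document; each statement's English description precedes it below -/
import Mathlib

section
/- For any real matrices U and V, the pseudoinverse of the Kronecker product is the Kronecker product of the pseudoinverses: (U ⊗ V)† = U† ⊗ V†. -/
open Matrix

/-- `B` satisfies the four Penrose conditions for `A`, i.e. `B = A†`. -/
def Matrix.IsMoorePenrose {m n : Type*} [Fintype m] [Fintype n]
    (A : Matrix m n ℝ) (B : Matrix n m ℝ) : Prop :=
  A * B * A = A ∧ B * A * B = B ∧ (A * B)ᵀ = A * B ∧ (B * A)ᵀ = B * A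

theorem isMoorePenrose_unique {m n : Type*} [Fintype m] [Fintype n]
    {A : Matrix m n ℝ} {B C : Matrix n m ℝ}
    (hB : A.IsMoorePenrose B) (hC : A.IsMoorePenrose C) : B = C := by
  obtain ⟨hB1, hB2, hB3, hB4⟩ := hB
  obtain ⟨hC1, hC2, hC3, hC4⟩ := hC
  have hAB : A * B = A * C := by
    calc A * B = (A * B)ᵀ := hB3.symm
    _ = Bᵀ * Aᵀ := by simp [Matrix.transpose_mul]
    _ = Bᵀ * (A * C * A)ᵀ := by rw [hC1]
    _ = Bᵀ * (Aᵀ * (A * C)ᵀ) := by simp [Matrix.transpose_mul, Matrix.mul_assoc]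
    _ = (A * B)ᵀ * (A * C)ᵀ := by simp [Matrix.transpose_mul, Matrix.mul_assoc]
    _ = (A * B) * (A * C) := by rw [hB3, hC3]
    _ = (A * B * A) * C := by simp [Matrix.mul_assoc]
    _ = A * C := by rw [hB1]
  have hBA : B * A = C * A := by
    calc B * A = (B * A)ᵀ := hB4.symm
    _ = Aᵀ * Bᵀ := by simp [Matrix.transpose_mul]
    _ = (A * C * A)ᵀ * Bᵀ := by rw [hC1]
    _ = (C * A)ᵀ * (Aᵀ * Bᵀ) := by simp [Matrix.transpose_mul, Matrix.mul_assoc]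
    _ = (C * A)ᵀ * (B * A)ᵀ := by simp [Matrix.transpose_mul]
    _ = (C * A) * (B * A) := by rw [hB4, hC4]
    _ = C * (A * B * A) := by simp [Matrix.mul_assoc]
    _ = C * A := by rw [hB1]
  calc B = B * A * B := hB2.symm
  _ = B * (A * C) := by rw [Matrix.mul_assoc, hAB]
  _ = B * A * C := by rw [Matrix.mul_assoc]
  _ = C * A * C := by rw [hBA]
  _ = C := hC2

/-- (U ⊗ V)† = U† ⊗ V†. -/
theorem pinv_kronecker (a b c d : ℕ)
    (U : Matrix (Fin a) (Fin b) ℝ) (V : Matrix (Fin c) (Fin d) ℝ)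
    (U' : Matrix (Fin b) (Fin a) ℝ) (V' : Matrix (Fin d) (Fin c) ℝ)
    (K : Matrix (Fin b × Fin d) (Fin a × Fin c) ℝ)
    (hU : U.IsMoorePenrose U') (hV : V.IsMoorePenrose V')
    (hK : (Matrix.kroneckerMap (· * ·) U V).IsMoorePenrose K) :
    K = Matrix.kroneckerMap (· * ·) U' V' := by
  obtain ⟨hU1, hU2, hU3, hU4⟩ := hU
  obtain ⟨hV1, hV2, hV3, hV4⟩ := hV
  refine isMoorePenrose_unique hK ⟨?_, ?_, ?_, ?_⟩
  · rw [← Matrix.mul_kronecker_mul, ← Matrix.mul_kronecker_mul, hU1, hV1]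
  · rw [← Matrix.mul_kronecker_mul, ← Matrix.mul_kronecker_mul, hU2, hV2]
  · rw [← Matrix.mul_kronecker_mul, ← Matrix.kroneckerMap_transpose]
    show Matrix.kroneckerMap (· * ·) (U * U')ᵀ (V * V')ᵀ = _
    rw [hU3, hV3]
  · rw [← Matrix.mul_kronecker_mul, ← Matrix.kroneckerMap_transpose]
    show Matrix.kroneckerMap (· * ·) (U' * U)ᵀ (V' * V)ᵀ = _
    rw [hU4, hV4]
end

section
/- Let A₂ ∈ ℝ^{d₂×d₁}, A₁ ∈ ℝ^{d₁×d₀}, X ∈ ℝ^{d₀×m}, Y ∈ ℝ^{d₂×m}, and let L(A₁,A₂) = ½‖A₂A₁X − Y‖_F². If the gradient of L with respect to A₁ vanishes, i.e. A₂ᵀ(A₂A₁X − Y)Xᵀ = 0, then A₂A₁X = A₂A₂†YX†X. -/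
open Matrix

/-- If ∇_{A₁} (½‖A₂A₁X − Y‖_F²) = 0, then A₂A₁X = A₂A₂†YX†X. -/
theorem product_at_stationary_point (d₀ d₁ d₂ m : ℕ)
    (A₂ : Matrix (Fin d₂) (Fin d₁) ℝ) (A₁ : Matrix (Fin d₁) (Fin d₀) ℝ)
    (X : Matrix (Fin d₀) (Fin m) ℝ) (Y : Matrix (Fin d₂) (Fin m) ℝ)
    (A₂p : Matrix (Fin d₁) (Fin d₂) ℝ) (Xp : Matrix (Fin m) (Fin d₀) ℝ)
    (hA₂p : A₂.IsMoorePenrose A₂p) (hXp : X.IsMoorePenrose Xp)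
    (hgrad : A₂ᵀ * (A₂ * A₁ * X - Y) * Xᵀ = 0) :
    A₂ * A₁ * X = A₂ * A₂p * Y * Xp * X := by
  obtain ⟨hA1, hA2, hA3, hA4⟩ := hA₂p
  obtain ⟨hX1, hX2, hX3, hX4⟩ := hXp
  have e1 : A₂pᵀ * A₂ᵀ = A₂ * A₂p := by rw [← transpose_mul, hA3]
  have e2 : Xᵀ * Xpᵀ = Xp * X := by rw [← transpose_mul, hX4]
  have key : A₂ * A₂p * (A₂ * A₁ * X - Y) * (Xp * X) = 0 := by
    have h : A₂pᵀ * (A₂ᵀ * (A₂ * A₁ * X - Y) * Xᵀ) * Xpᵀ = 0 := by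
      rw [hgrad]; simp
    calc A₂ * A₂p * (A₂ * A₁ * X - Y) * (Xp * X)
        = (A₂pᵀ * A₂ᵀ) * (A₂ * A₁ * X - Y) * (Xᵀ * Xpᵀ) := by rw [e1, e2]
      _ = A₂pᵀ * (A₂ᵀ * (A₂ * A₁ * X - Y) * Xᵀ) * Xpᵀ := by
          simp only [Matrix.mul_assoc]
      _ = 0 := h
  have expand : A₂ * A₂p * (A₂ * A₁ * X) * (Xp * X)
      = A₂ * A₂p * Y * (Xp * X) := by
    have h' : A₂ * A₂p * (A₂ * A₁ * X) * (Xp * X)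
        - A₂ * A₂p * Y * (Xp * X) = 0 := by
      rw [← Matrix.sub_mul, ← Matrix.mul_sub]; exact key
    exact sub_eq_zero.mp h'
  calc A₂ * A₁ * X
      = (A₂ * A₂p * A₂) * A₁ * (X * Xp * X) := by rw [hA1, hX1]
    _ = A₂ * A₂p * (A₂ * A₁ * X) * (Xp * X) := by
        simp only [Matrix.mul_assoc]
    _ = A₂ * A₂p * Y * (Xp * X) := expand
    _ = A₂ * A₂p * Y * Xp * X := by simp only [Matrix.mul_assoc]
end

section
/- Let A₂ ∈ ℝ^{d₂×d₁}, A₁ ∈ ℝ^{d₁×d₀}, X ∈ ℝ^{d₀×m}, Y ∈ ℝ^{d₂×m}. If A₂ᵀ(A₂A₁X − Y)Xᵀ = 0, then A₁ = A₂†YX† + L₁ − A₂†A₂L₁XX† for some matrix L₁ ∈ ℝ^{d₁×d₀}. -/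
open Matrix

/-- A stationary point in A₁ has the form A₁ = A₂†YX† + L₁ − A₂†A₂L₁XX†. -/
theorem stationary_A1_form (d₀ d₁ d₂ m : ℕ)
    (A₂ : Matrix (Fin d₂) (Fin d₁) ℝ) (A₁ : Matrix (Fin d₁) (Fin d₀) ℝ)
    (X : Matrix (Fin d₀) (Fin m) ℝ) (Y : Matrix (Fin d₂) (Fin m) ℝ)
    (A₂p : Matrix (Fin d₁) (Fin d₂) ℝ) (Xp : Matrix (Fin m) (Fin d₀) ℝ)
    (hA₂p : A₂.IsMoorePenrose A₂p) (hXp : X.IsMoorePenrose Xp)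
    (hgrad : A₂ᵀ * (A₂ * A₁ * X - Y) * Xᵀ = 0) :
    ∃ L₁ : Matrix (Fin d₁) (Fin d₀) ℝ,
      A₁ = A₂p * Y * Xp + L₁ - A₂p * A₂ * L₁ * X * Xp := by
  obtain ⟨h1, h2, h3, h4⟩ := hA₂p
  obtain ⟨k1, k2, k3, k4⟩ := hXp
  refine ⟨A₁, ?_⟩
  have e1 : A₂p * (A₂pᵀ * A₂ᵀ) = A₂p := by
    rw [← transpose_mul, h3, ← Matrix.mul_assoc, h2]
  have e2 : Xᵀ * Xpᵀ * Xp = Xp := by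
    rw [← transpose_mul, k4, Matrix.mul_assoc, ← Matrix.mul_assoc, k2]
  have key : A₂p * A₂ * A₁ * X * Xp = A₂p * Y * Xp := by
    have h := congrArg (fun M : Matrix (Fin d₁) (Fin d₀) ℝ =>
      A₂p * A₂pᵀ * M * Xpᵀ * Xp) hgrad
    simp only [Matrix.mul_sub, Matrix.sub_mul, Matrix.mul_zero, Matrix.zero_mul,
      sub_eq_zero] at h
    calc A₂p * A₂ * A₁ * X * Xp
        = A₂p * (A₂pᵀ * A₂ᵀ) * A₂ * A₁ * X * (Xᵀ * Xpᵀ * Xp) := by rw [e1, e2]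
      _ = A₂p * A₂pᵀ * (A₂ᵀ * (A₂ * A₁ * X) * Xᵀ) * Xpᵀ * Xp := by
          simp only [Matrix.mul_assoc]
      _ = A₂p * A₂pᵀ * (A₂ᵀ * Y * Xᵀ) * Xpᵀ * Xp := by rw [h]
      _ = A₂p * (A₂pᵀ * A₂ᵀ) * Y * (Xᵀ * Xpᵀ * Xp) := by
          simp only [Matrix.mul_assoc]
      _ = A₂p * Y * Xp := by rw [e1, e2]
  rw [key]
  abel
end

section
/- Let A₂, A₁, X, Y be real matrices of compatible dimensions and let Σ = YX†X Yᵀ. If A₂ᵀ(A₂A₁X − Y)Xᵀ = 0 and (A₂A₁X − Y)XᵀA₁ᵀ = 0, then, with P = A₂A₂† the orthogonal projection onto the column space of A₂, we have PΣP = ΣP = PΣ. -/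
open Matrix

/-- At a critical point of ½‖A₂A₁X − Y‖_F², with P = A₂A₂† and Σ = YX†XYᵀ,
we have PΣP = ΣP = PΣ. -/
theorem proj_commutes_with_sigma (d₀ d₁ d₂ m : ℕ)
    (A₂ : Matrix (Fin d₂) (Fin d₁) ℝ) (A₁ : Matrix (Fin d₁) (Fin d₀) ℝ)
    (X : Matrix (Fin d₀) (Fin m) ℝ) (Y : Matrix (Fin d₂) (Fin m) ℝ)
    (A₂p : Matrix (Fin d₁) (Fin d₂) ℝ) (Xp : Matrix (Fin m) (Fin d₀) ℝ)
    (hA₂p : A₂.IsMoorePenrose A₂p) (hXp : X.IsMoorePenrose Xp)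
    (hgrad₁ : A₂ᵀ * (A₂ * A₁ * X - Y) * Xᵀ = 0)
    (hgrad₂ : (A₂ * A₁ * X - Y) * Xᵀ * A₁ᵀ = 0) :
    (A₂ * A₂p) * (Y * Xp * X * Yᵀ) * (A₂ * A₂p) = (Y * Xp * X * Yᵀ) * (A₂ * A₂p) ∧
    (Y * Xp * X * Yᵀ) * (A₂ * A₂p) = (A₂ * A₂p) * (Y * Xp * X * Yᵀ) := by
  obtain ⟨hA1, -, hA3, -⟩ := hA₂p
  obtain ⟨hX1, -, -, hX4⟩ := hXp
  -- basic transpose facts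
  have tA : A₂pᵀ * A₂ᵀ = A₂ * A₂p := by rw [← transpose_mul, hA3]
  have tX : Xᵀ * Xpᵀ = Xp * X := by rw [← transpose_mul, hX4]
  -- h1 : A₂ᵀ * (A₂*A₁*X) * Xᵀ = A₂ᵀ * Y * Xᵀ
  have h1 : A₂ᵀ * (A₂ * A₁ * X) * Xᵀ = A₂ᵀ * Y * Xᵀ := by
    have := hgrad₁
    rw [Matrix.mul_sub, Matrix.sub_mul, sub_eq_zero] at this
    exact this
  -- h2 : A₂*A₁*X*Xᵀ*A₁ᵀ = Y*Xᵀ*A₁ᵀ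
  have h2 : A₂ * A₁ * X * Xᵀ * A₁ᵀ = Y * Xᵀ * A₁ᵀ := by
    have := hgrad₂
    rw [Matrix.sub_mul, Matrix.sub_mul, sub_eq_zero] at this
    exact this
  -- key1 : A₂*A₁*X = (A₂*A₂p)*Y*(Xp*X)
  have key1 : A₂ * A₁ * X = A₂ * A₂p * Y * (Xp * X) := by
    have h := congrArg (fun M => A₂pᵀ * M * Xpᵀ) h1
    calc A₂ * A₁ * X = A₂ * A₂p * A₂ * A₁ * (X * Xp * X) := by rw [hA1, hX1]
      _ = A₂pᵀ * A₂ᵀ * (A₂ * A₁ * X) * (Xᵀ * Xpᵀ) := by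
          rw [tA, tX]; simp [Matrix.mul_assoc]
      _ = A₂pᵀ * (A₂ᵀ * (A₂ * A₁ * X) * Xᵀ) * Xpᵀ := by simp [Matrix.mul_assoc]
      _ = A₂pᵀ * (A₂ᵀ * Y * Xᵀ) * Xpᵀ := by rw [h1]
      _ = A₂pᵀ * A₂ᵀ * Y * (Xᵀ * Xpᵀ) := by simp [Matrix.mul_assoc]
      _ = A₂ * A₂p * Y * (Xp * X) := by rw [tA, tX]
  -- key2 : Σ * P = (A₂*A₁*X) * (A₂*A₁*X)ᵀ
  have hPs : (A₂ * A₂p)ᵀ = A₂ * A₂p := hA3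
  have hSs : (Y * Xp * X * Yᵀ)ᵀ = Y * Xp * X * Yᵀ := by
    calc (Y * Xp * X * Yᵀ)ᵀ = Y * (Xp * X)ᵀ * Yᵀ := by
          simp [transpose_mul, Matrix.mul_assoc]
      _ = Y * Xp * X * Yᵀ := by rw [hX4]; simp [Matrix.mul_assoc]
  have hPS : (A₂ * A₂p) * (Y * Xp * X * Yᵀ) = A₂ * A₁ * X * Yᵀ := by
    calc (A₂ * A₂p) * (Y * Xp * X * Yᵀ) = A₂ * A₂p * Y * (Xp * X) * Yᵀ := by
          simp [Matrix.mul_assoc]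
      _ = A₂ * A₁ * X * Yᵀ := by rw [← key1]
  have hSP : (Y * Xp * X * Yᵀ) * (A₂ * A₂p) = Y * Xᵀ * A₁ᵀ * A₂ᵀ := by
    calc (Y * Xp * X * Yᵀ) * (A₂ * A₂p)
        = ((A₂ * A₂p)ᵀ * (Y * Xp * X * Yᵀ)ᵀ)ᵀ := by simp [transpose_mul]
      _ = ((A₂ * A₂p) * (Y * Xp * X * Yᵀ))ᵀ := by rw [hPs, hSs]
      _ = (A₂ * A₁ * X * Yᵀ)ᵀ := by rw [hPS]
      _ = Y * Xᵀ * A₁ᵀ * A₂ᵀ := by simp [transpose_mul, Matrix.mul_assoc]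
  have hE : Y * Xᵀ * A₁ᵀ * A₂ᵀ = A₂ * A₁ * X * Xᵀ * A₁ᵀ * A₂ᵀ := by
    rw [← h2]
  have hEsym : (A₂ * A₁ * X * Xᵀ * A₁ᵀ * A₂ᵀ)ᵀ = A₂ * A₁ * X * Xᵀ * A₁ᵀ * A₂ᵀ := by
    simp [transpose_mul, Matrix.mul_assoc]
  have hcomm : (Y * Xp * X * Yᵀ) * (A₂ * A₂p) = (A₂ * A₂p) * (Y * Xp * X * Yᵀ) := by
    calc (Y * Xp * X * Yᵀ) * (A₂ * A₂p) = A₂ * A₁ * X * Xᵀ * A₁ᵀ * A₂ᵀ := by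
          rw [hSP, hE]
      _ = (A₂ * A₁ * X * Xᵀ * A₁ᵀ * A₂ᵀ)ᵀ := hEsym.symm
      _ = (Y * Xᵀ * A₁ᵀ * A₂ᵀ)ᵀ := by rw [← hE]
      _ = ((Y * Xp * X * Yᵀ) * (A₂ * A₂p))ᵀ := by rw [← hSP]
      _ = (A₂ * A₂p)ᵀ * (Y * Xp * X * Yᵀ)ᵀ := by simp [transpose_mul]
      _ = (A₂ * A₂p) * (Y * Xp * X * Yᵀ) := by rw [hPs, hSs]
  refine ⟨?_, hcomm⟩
  calc (A₂ * A₂p) * (Y * Xp * X * Yᵀ) * (A₂ * A₂p)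
      = (A₂ * A₂p) * ((Y * Xp * X * Yᵀ) * (A₂ * A₂p)) := by rw [Matrix.mul_assoc]
    _ = (A₂ * A₂p) * (A₂ * A₁ * X * Xᵀ * A₁ᵀ * A₂ᵀ) := by rw [hSP, hE]
    _ = A₂ * A₂p * A₂ * (A₁ * (X * (Xᵀ * (A₁ᵀ * A₂ᵀ)))) := by simp [Matrix.mul_assoc]
    _ = A₂ * (A₁ * (X * (Xᵀ * (A₁ᵀ * A₂ᵀ)))) := by rw [hA1]
    _ = A₂ * A₁ * X * Xᵀ * A₁ᵀ * A₂ᵀ := by simp [Matrix.mul_assoc]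
    _ = (Y * Xp * X * Yᵀ) * (A₂ * A₂p) := by rw [← hE, ← hSP]
end

section
/- Let X ∈ ℝ^{d₀×m}, Y ∈ ℝ^{d₂×m}, A₁ ∈ ℝ^{d₁×d₀}, A₂ ∈ ℝ^{d₂×d₁} and suppose A₂A₁X = A₂A₂† Y X†X (the condition satisfied at any critical point of L = ½‖A₂A₁X − Y‖_F²). Then L(A₁,A₂) = ½ Tr(YYᵀ) − ½ Tr(A₂A₂† Σ), where Σ = YX†XYᵀ. -/
open Matrix

private lemma aux_trace {d m : ℕ} (P : Matrix (Fin d) (Fin d) ℝ)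
    (Q : Matrix (Fin m) (Fin m) ℝ) (Y : Matrix (Fin d) (Fin m) ℝ)
    (hP : Pᵀ = P) (hPP : P * P = P) (hQ : Qᵀ = Q) (hQQ : Q * Q = Q) :
    ((P * Y * Q - Y) * (P * Y * Q - Y)ᵀ).trace
      = (Y * Yᵀ).trace - (P * (Y * Q * Yᵀ)).trace := by
  have cyc : ∀ (A : Matrix (Fin d) (Fin m) ℝ) (B : Matrix (Fin m) (Fin d) ℝ),
      (A * B).trace = (B * A).trace := fun A B => trace_mul_comm A B
  have t1 : (P * Y * Q * (P * Y * Q)ᵀ).trace = (P * (Y * Q * Yᵀ)).trace := by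
    rw [transpose_mul, transpose_mul, hP, hQ]
    calc (P * Y * Q * (Q * (Yᵀ * P))).trace
        = (P * (Y * (Q * (Q * (Yᵀ * P))))).trace := by
          simp only [Matrix.mul_assoc]
      _ = (P * (Y * (Q * (Yᵀ * P)))).trace := by
          rw [← Matrix.mul_assoc Q Q, hQQ]
      _ = ((Y * (Q * (Yᵀ * P))) * P).trace := trace_mul_comm _ _
      _ = (Y * (Q * (Yᵀ * (P * P)))).trace := by simp only [Matrix.mul_assoc]
      _ = (Y * (Q * (Yᵀ * P))).trace := by rw [hPP]
      _ = (P * (Y * (Q * Yᵀ))).trace := by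
          rw [trace_mul_comm P]
          simp only [Matrix.mul_assoc]
      _ = (P * (Y * Q * Yᵀ)).trace := by simp only [Matrix.mul_assoc]
  have t2 : (P * Y * Q * Yᵀ).trace = (P * (Y * Q * Yᵀ)).trace := by
    simp only [Matrix.mul_assoc]
  have t3 : (Y * (P * Y * Q)ᵀ).trace = (P * (Y * Q * Yᵀ)).trace := by
    rw [transpose_mul, transpose_mul, hP, hQ]
    calc (Y * (Q * (Yᵀ * P))).trace
        = (P * (Y * (Q * Yᵀ))).trace := by
          rw [trace_mul_comm P]; simp only [Matrix.mul_assoc]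
      _ = (P * (Y * Q * Yᵀ)).trace := by simp only [Matrix.mul_assoc]
  rw [transpose_sub, Matrix.sub_mul, Matrix.mul_sub, Matrix.mul_sub, trace_sub, trace_sub, trace_sub, t1, t2, t3]
  ring

/-- If A₂A₁X = A₂A₂†YX†X, then
½‖A₂A₁X − Y‖_F² = ½Tr(YYᵀ) − ½Tr(A₂A₂†Σ) with Σ = YX†XYᵀ. -/
theorem loss_value_at_critical_point (d₀ d₁ d₂ m : ℕ)
    (A₂ : Matrix (Fin d₂) (Fin d₁) ℝ) (A₁ : Matrix (Fin d₁) (Fin d₀) ℝ)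
    (X : Matrix (Fin d₀) (Fin m) ℝ) (Y : Matrix (Fin d₂) (Fin m) ℝ)
    (A₂p : Matrix (Fin d₁) (Fin d₂) ℝ) (Xp : Matrix (Fin m) (Fin d₀) ℝ)
    (hA₂p : A₂.IsMoorePenrose A₂p) (hXp : X.IsMoorePenrose Xp)
    (hcrit : A₂ * A₁ * X = A₂ * A₂p * Y * Xp * X) :
    (1 / 2 : ℝ) * ((A₂ * A₁ * X - Y) * (A₂ * A₁ * X - Y)ᵀ).trace
      = (1 / 2 : ℝ) * (Y * Yᵀ).trace
        - (1 / 2 : ℝ) * (A₂ * A₂p * (Y * Xp * X * Yᵀ)).trace := by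
  obtain ⟨h1, -, h3, -⟩ := hA₂p
  obtain ⟨-, h5, -, h6⟩ := hXp
  have hPP : (A₂ * A₂p) * (A₂ * A₂p) = A₂ * A₂p := by
    rw [← Matrix.mul_assoc, h1]
  have hQQ : (Xp * X) * (Xp * X) = Xp * X := by
    rw [← Matrix.mul_assoc, h5]
  have hc : A₂ * A₁ * X = (A₂ * A₂p) * Y * (Xp * X) := by
    rw [hcrit]; simp only [Matrix.mul_assoc]
  have key := aux_trace (A₂ * A₂p) (Xp * X) Y h3 hPP h6 hQQ
  rw [hc, key]
  have : A₂ * A₂p * (Y * (Xp * X) * Yᵀ) = A₂ * A₂p * (Y * Xp * X * Yᵀ) := by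
    simp only [Matrix.mul_assoc]
  rw [this]; ring
end

section
/- Let Aₖ ∈ ℝ^{dₖ×d_{k−1}} for k = 1,...,ℓ, X ∈ ℝ^{d₀×m}, Y ∈ ℝ^{d_ℓ×m}, and L_D = ½‖A_ℓ⋯A₁X − Y‖_F². If ∇_{Aₖ} L_D = 0 for some k, i.e. BᵀB Aₖ W Wᵀ = Bᵀ Y Xᵀ Cᵀ where B = A_ℓ⋯A_{k+1}, C = A_{k−1}⋯A₁, W = CX, then B Aₖ C X = BB† Y (CX)† CX. -/
open Matrix

/-- Deep-network stationarity in the k-th layer: with B = A_ℓ⋯A_{k+1},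
C = A_{k−1}⋯A₁ and W = CX, if BᵀB Aₖ W Wᵀ = Bᵀ Y Xᵀ Cᵀ then
B Aₖ C X = BB† Y (CX)† CX. -/
theorem deep_stationary_product (dℓ dk dk1 d₀ m : ℕ)
    (B : Matrix (Fin dℓ) (Fin dk) ℝ) (Ak : Matrix (Fin dk) (Fin dk1) ℝ)
    (C : Matrix (Fin dk1) (Fin d₀) ℝ)
    (X : Matrix (Fin d₀) (Fin m) ℝ) (Y : Matrix (Fin dℓ) (Fin m) ℝ)
    (Bp : Matrix (Fin dk) (Fin dℓ) ℝ) (Wp : Matrix (Fin m) (Fin dk1) ℝ)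
    (hBp : B.IsMoorePenrose Bp) (hWp : (C * X).IsMoorePenrose Wp)
    (hgrad : Bᵀ * B * Ak * (C * X) * (C * X)ᵀ = Bᵀ * Y * Xᵀ * Cᵀ) :
    B * Ak * C * X = B * Bp * Y * Wp * (C * X) := by
  obtain ⟨hB1, hB2, hB3, hB4⟩ := hBp
  obtain ⟨hW1, hW2, hW3, hW4⟩ := hWp
  set W := C * X with hW
  have h1 : Bpᵀ * Bᵀ = B * Bp := by rw [← Matrix.transpose_mul]; exact hB3
  have h2 : Wᵀ * Wpᵀ = Wp * W := by rw [← Matrix.transpose_mul]; exact hW4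
  have hgrad' : Bᵀ * Y * Wᵀ = Bᵀ * B * Ak * W * Wᵀ := by
    rw [hgrad, Matrix.mul_assoc (Bᵀ * Y), ← Matrix.transpose_mul]
  have step1 : B * Ak * W * Wᵀ = B * Bp * Y * Wᵀ := by
    calc B * Ak * W * Wᵀ = B * Bp * B * Ak * W * Wᵀ := by rw [hB1]
      _ = Bpᵀ * Bᵀ * B * Ak * W * Wᵀ := by rw [h1]
      _ = Bpᵀ * (Bᵀ * Y * Wᵀ) := by rw [hgrad']; simp [Matrix.mul_assoc]
      _ = Bpᵀ * Bᵀ * Y * Wᵀ := by simp [Matrix.mul_assoc]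
      _ = B * Bp * Y * Wᵀ := by rw [h1]
  calc B * Ak * C * X = B * Ak * W := by rw [hW, Matrix.mul_assoc]
    _ = B * Ak * (W * Wp * W) := by rw [hW1]
    _ = B * Ak * W * (Wᵀ * Wpᵀ) := by rw [h2]; simp [Matrix.mul_assoc]
    _ = B * Ak * W * Wᵀ * Wpᵀ := by rw [Matrix.mul_assoc (B * Ak * W)]
    _ = B * Bp * Y * Wᵀ * Wpᵀ := by rw [step1]
    _ = B * Bp * Y * (Wp * W) := by rw [← h2, Matrix.mul_assoc (B * Bp * Y)]
    _ = B * Bp * Y * Wp * W := by rw [Matrix.mul_assoc (B * Bp * Y)]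
end

section
/- Let L_D(A₁,...,A_ℓ) = ½‖A_ℓ⋯A₁X − Y‖_F² be the loss of a deep linear network and suppose (A₁,...,A_ℓ) satisfies all gradient equations ∇_{Aₖ} L_D = 0 as well as A_ℓ⋯A₁X = P YX†X where P is the orthogonal projection onto col(A_ℓ⋯A₂). Then L_D(A₁,...,A_ℓ) = ½ Tr(YYᵀ) − ½ Tr(P Σ₀) where Σ₀ = YX†XYᵀ. -/
open Matrix

/-- Deep linear network loss value at a critical point: writing B = A_ℓ⋯A₂ for
the top product (so the full product is B·A₁), if A_ℓ⋯A₁X = BB† YX†X, then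
L_D = ½Tr(YYᵀ) − ½Tr(BB† Σ₀) with Σ₀ = YX†XYᵀ. -/
theorem deep_loss_value (d₀ d₁ dℓ m : ℕ)
    (A₁ : Matrix (Fin d₁) (Fin d₀) ℝ) (B : Matrix (Fin dℓ) (Fin d₁) ℝ)
    (X : Matrix (Fin d₀) (Fin m) ℝ) (Y : Matrix (Fin dℓ) (Fin m) ℝ)
    (Bp : Matrix (Fin d₁) (Fin dℓ) ℝ) (Xp : Matrix (Fin m) (Fin d₀) ℝ)
    (hBp : B.IsMoorePenrose Bp) (hXp : X.IsMoorePenrose Xp)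
    (hcrit : B * A₁ * X = B * Bp * Y * Xp * X) :
    (1 / 2 : ℝ) * ((B * A₁ * X - Y) * (B * A₁ * X - Y)ᵀ).trace
      = (1 / 2 : ℝ) * (Y * Yᵀ).trace
        - (1 / 2 : ℝ) * (B * Bp * (Y * Xp * X * Yᵀ)).trace := by
  obtain ⟨hB1, hB2, hB3, hB4⟩ := hBp
  obtain ⟨hX1, hX2, hX3, hX4⟩ := hXp
  rw [hcrit]
  set M := B * Bp * Y * Xp * X with hM
  have hQ : (Xp * X) * (Xp * X) = Xp * X := by
    calc (Xp * X) * (Xp * X) = (Xp * X * Xp) * X := by simp only [Matrix.mul_assoc]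
    _ = Xp * X := by rw [hX2]
  have hP : (B * Bp) * (B * Bp) = B * Bp := by
    calc (B * Bp) * (B * Bp) = (B * Bp * B) * Bp := by simp only [Matrix.mul_assoc]
    _ = B * Bp := by rw [hB1]
  have hMt : Mᵀ = Xp * X * Yᵀ * (B * Bp) := by
    rw [hM]
    calc (B * Bp * Y * Xp * X)ᵀ = (Xp * X)ᵀ * Yᵀ * (B * Bp)ᵀ := by
          simp only [Matrix.transpose_mul, Matrix.mul_assoc]
    _ = Xp * X * Yᵀ * (B * Bp) := by rw [hX4, hB3]
  have hT2 : (M * Yᵀ).trace = (B * Bp * (Y * Xp * X * Yᵀ)).trace := by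
    rw [hM]; congr 1; simp only [Matrix.mul_assoc]
  have hT3 : (Y * Mᵀ).trace = (B * Bp * (Y * Xp * X * Yᵀ)).trace := by
    rw [hMt]
    rw [show Y * (Xp * X * Yᵀ * (B * Bp)) = (Y * (Xp * X) * Yᵀ) * (B * Bp) by
      simp only [Matrix.mul_assoc]]
    rw [Matrix.trace_mul_comm]
    congr 1; simp only [Matrix.mul_assoc]
  have hT1 : (M * Mᵀ).trace = (B * Bp * (Y * Xp * X * Yᵀ)).trace := by
    rw [hMt, hM]
    rw [show B * Bp * Y * Xp * X * (Xp * X * Yᵀ * (B * Bp))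
        = B * Bp * (Y * ((Xp * X) * (Xp * X)) * (Yᵀ * (B * Bp))) by simp only [Matrix.mul_assoc]]
    rw [hQ]
    rw [show B * Bp * (Y * (Xp * X) * (Yᵀ * (B * Bp)))
        = (B * Bp * (Y * Xp * X * Yᵀ)) * (B * Bp) by simp only [Matrix.mul_assoc]]
    rw [Matrix.trace_mul_comm]
    rw [show B * Bp * (B * Bp * (Y * Xp * X * Yᵀ)) = ((B * Bp) * (B * Bp)) * (Y * Xp * X * Yᵀ) by
      simp only [Matrix.mul_assoc]]
    rw [hP]
  have expand : (M - Y) * (M - Y)ᵀ = M * Mᵀ - M * Yᵀ - (Y * Mᵀ - Y * Yᵀ) := by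
    rw [Matrix.transpose_sub, Matrix.sub_mul, Matrix.mul_sub, Matrix.mul_sub]
  rw [expand, Matrix.trace_sub, Matrix.trace_sub, Matrix.trace_sub, hT1, hT2, hT3]
  ring
end

section
/- Consider the nonlinear one-hidden-layer network loss L_N(A₁,A₂) = ½‖A₂σ(A₁X) − Y‖_F² with ReLU activation σ(x) = max(x,0) applied entrywise, where X = I₂ and Y = diag(2,1) are 2×2, d₁ = 1 (so A₁ ∈ ℝ^{1×2}, A₂ ∈ ℝ^{2×1}). The point A₁ = (1, −1), A₂ = (2, 0)ᵀ is a local minimum of L_N with L_N = 1/2, and the point A₁ = (−1, 1), A₂ = (0, 1)ᵀ is a local minimum of L_N with L_N = 2; hence L_N has a local minimum that is not a global minimum. -/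
open Matrix

/-- The ReLU network loss L_N(A₁,A₂) = ½‖A₂σ(A₁X) − Y‖_F² with X = I₂,
Y = diag(2,1), d₁ = 1. -/
noncomputable def LN (A₁ : Matrix (Fin 1) (Fin 2) ℝ) (A₂ : Matrix (Fin 2) (Fin 1) ℝ) : ℝ :=
  (1 / 2 : ℝ) * ∑ i, ∑ j,
    ((A₂ * (A₁ * (1 : Matrix (Fin 2) (Fin 2) ℝ)).map (fun x => max x 0)
        - (Matrix.diagonal ![2, 1] : Matrix (Fin 2) (Fin 2) ℝ)) i j) ^ 2

/-- (A₁,A₂) is a local minimum of L_N. -/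
def IsLocalMinLN (A₁ : Matrix (Fin 1) (Fin 2) ℝ) (A₂ : Matrix (Fin 2) (Fin 1) ℝ) : Prop :=
  ∃ ε > (0 : ℝ), ∀ B₁ : Matrix (Fin 1) (Fin 2) ℝ, ∀ B₂ : Matrix (Fin 2) (Fin 1) ℝ,
    (∀ i j, |B₁ i j - A₁ i j| < ε) → (∀ i j, |B₂ i j - A₂ i j| < ε) →
    LN A₁ A₂ ≤ LN B₁ B₂

lemma LN_eq (A₁ : Matrix (Fin 1) (Fin 2) ℝ) (A₂ : Matrix (Fin 2) (Fin 1) ℝ) :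
    LN A₁ A₂ = (1/2) * ((A₂ 0 0 * max (A₁ 0 0) 0 - 2)^2 + (A₂ 0 0 * max (A₁ 0 1) 0)^2
      + (A₂ 1 0 * max (A₁ 0 0) 0)^2 + (A₂ 1 0 * max (A₁ 0 1) 0 - 1)^2) := by
  simp [LN, Matrix.mul_apply, Fin.sum_univ_succ, Matrix.diagonal]
  ring

/-- A₁ = (1,−1), A₂ = (2,0)ᵀ is a local min with value 1/2; A₁ = (−1,1),
A₂ = (0,1)ᵀ is a local min with value 2; hence a local minimum that is not a
global minimum exists. -/
theorem relu_spurious_local_minimum :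
    LN !![1, -1] !![2; 0] = 1 / 2 ∧ IsLocalMinLN !![1, -1] !![2; 0] ∧
    LN !![-1, 1] !![0; 1] = 2 ∧ IsLocalMinLN !![-1, 1] !![0; 1] ∧
    ¬ (∀ B₁ : Matrix (Fin 1) (Fin 2) ℝ, ∀ B₂ : Matrix (Fin 2) (Fin 1) ℝ,
        LN !![-1, 1] !![0; 1] ≤ LN B₁ B₂) := by
  have h1 : LN !![1, -1] !![2; 0] = 1 / 2 := by rw [LN_eq]; norm_num
  have h2 : LN !![-1, 1] !![0; 1] = 2 := by rw [LN_eq]; norm_num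
  refine ⟨h1, ⟨1/2, by norm_num, ?_⟩, h2, ⟨1/2, by norm_num, ?_⟩, ?_⟩
  · intro B₁ B₂ hB₁ hB₂
    rw [h1, LN_eq]
    have hb : max (B₁ 0 1) 0 = 0 := by
      have := hB₁ 0 1
      have : B₁ 0 1 < 0 := by
        have := abs_lt.mp this; simp at this ⊢; linarith [this.2]
      exact max_eq_right this.le
    rw [hb]
    nlinarith [sq_nonneg (B₂ 0 0 * max (B₁ 0 0) 0 - 2), sq_nonneg (B₂ 1 0 * max (B₁ 0 0) 0)]
  · intro B₁ B₂ hB₁ hB₂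
    rw [h2, LN_eq]
    have ha : max (B₁ 0 0) 0 = 0 := by
      have := hB₁ 0 0
      have : B₁ 0 0 < 0 := by
        have := abs_lt.mp this; simp at this ⊢; linarith [this.2]
      exact max_eq_right this.le
    rw [ha]
    nlinarith [sq_nonneg (B₂ 0 0 * max (B₁ 0 1) 0), sq_nonneg (B₂ 1 0 * max (B₁ 0 1) 0 - 1)]
  · intro h
    have := h !![1, -1] !![2; 0]
    rw [h1, h2] at this
    linarith
end

section
/- Let X ∈ ℝ^{d₀×m}, Y ∈ ℝ^{d₂×m}, let Σ = YX†XYᵀ = UΛUᵀ be a full SVD, and let V ∈ ℝ^{d₂×d₁} be any matrix with VᵀV a diagonal 0-1 matrix whose block pattern conforms to the multiplicities of Λ (i.e., ΛVVᵀ = VVᵀΛ and VᵀΛV V† = ΛV V† hold appropriately), and let C ∈ ℝ^{d₁×d₁} be invertible. Then the pair A₁ = C⁻¹VᵀUᵀYX†, A₂ = UVC is a critical point of L = ½‖A₂A₁X − Y‖_F², i.e. A₂ᵀ(A₂A₁X − Y)Xᵀ = 0 and (A₂A₁X − Y)XᵀA₁ᵀ = 0. -/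
open Matrix

/-- Sufficiency (with L₁ = 0): if Σ = YX†XYᵀ = UΛUᵀ is a full SVD, VᵀV is a
diagonal 0-1 matrix, V's block pattern conforms to the multiplicities of Λ
(i.e. Λ(VVᵀ) = (VVᵀ)Λ and VVᵀΛV = ΛV), and C is invertible, then
A₁ = C⁻¹VᵀUᵀYX†, A₂ = UVC is a critical point of ½‖A₂A₁X − Y‖_F². -/
theorem critical_point_sufficiency (d₀ d₁ d₂ m : ℕ)
    (X : Matrix (Fin d₀) (Fin m) ℝ) (Y : Matrix (Fin d₂) (Fin m) ℝ)
    (Xp : Matrix (Fin m) (Fin d₀) ℝ) (hXp : X.IsMoorePenrose Xp)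
    (U Λ : Matrix (Fin d₂) (Fin d₂) ℝ)
    (hU₁ : Uᵀ * U = 1) (hU₂ : U * Uᵀ = 1) (hΛdiag : Λ.IsDiag)
    (hSVD : Y * Xp * X * Yᵀ = U * Λ * Uᵀ)
    (V : Matrix (Fin d₂) (Fin d₁) ℝ)
    (hVdiag : (Vᵀ * V).IsDiag)
    (hV01 : ∀ j, (Vᵀ * V) j j = 0 ∨ (Vᵀ * V) j j = 1)
    (hcomm : Λ * (V * Vᵀ) = (V * Vᵀ) * Λ)
    (hblock : V * Vᵀ * Λ * V = Λ * V)
    (C Cinv : Matrix (Fin d₁) (Fin d₁) ℝ)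
    (hC₁ : C * Cinv = 1) (hC₂ : Cinv * C = 1) :
    (U * V * C)ᵀ * ((U * V * C) * (Cinv * Vᵀ * Uᵀ * Y * Xp) * X - Y) * Xᵀ = 0 ∧
    ((U * V * C) * (Cinv * Vᵀ * Uᵀ * Y * Xp) * X - Y) * Xᵀ *
      (Cinv * Vᵀ * Uᵀ * Y * Xp)ᵀ = 0 := by
  obtain ⟨h1, h2, h3, h4⟩ := hXp
  -- V * (VᵀV) = V, proved entrywise
  have hVD : V * (Vᵀ * V) = V := by
    ext i j
    rw [Matrix.mul_apply, Finset.sum_eq_single j]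
    · rcases hV01 j with h | h
      · have hsq : ∑ k, V k j ^ 2 = 0 := by
          have : (Vᵀ * V) j j = ∑ k, V k j ^ 2 := by
            simp [Matrix.mul_apply, Matrix.transpose_apply, sq]
          rw [← this, h]
        have hz : V i j ^ 2 = 0 :=
          (Finset.sum_eq_zero_iff_of_nonneg (fun k _ => sq_nonneg (V k j))).mp hsq i
            (Finset.mem_univ i)
        have : V i j = 0 := by
          have := sq_eq_zero_iff.mp hz
          exact this
        simp [h, this]
      · simp [h]
    · intro k _ hk
      rw [hVdiag hk, mul_zero]
    · simp
  have hVVV0 : Vᵀ * V * Vᵀ = Vᵀ := by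
    have := congrArg Matrix.transpose hVD
    simpa [Matrix.transpose_mul, Matrix.mul_assoc] using this
  -- helper rewrite lemmas
  have l1 : ∀ {α : Type} (B : Matrix (Fin d₂) α ℝ), Uᵀ * (U * B) = B := by
    intro α B; rw [← Matrix.mul_assoc, hU₁, Matrix.one_mul]
  have l2 : ∀ {α : Type} (B : Matrix (Fin d₁) α ℝ), C * (Cinv * B) = B := by
    intro α B; rw [← Matrix.mul_assoc, hC₁, Matrix.one_mul]
  have l3 : ∀ {α : Type} (B : Matrix (Fin d₂) α ℝ), Vᵀ * (V * (Vᵀ * B)) = Vᵀ * B := by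
    intro α B
    rw [← Matrix.mul_assoc, ← Matrix.mul_assoc, hVVV0]
  have hXX : Xp * (X * Xᵀ) = Xᵀ := by
    have h : (X * (Xp * X))ᵀ = Xᵀ := by rw [← Matrix.mul_assoc, h1]
    rw [Matrix.transpose_mul, h4, Matrix.mul_assoc] at h
    exact h
  have l5 : ∀ {α : Type} (B : Matrix (Fin m) α ℝ), Xᵀ * (Xpᵀ * B) = Xp * (X * B) := by
    intro α B
    rw [← Matrix.mul_assoc, ← Matrix.transpose_mul, h4, Matrix.mul_assoc]
  have l6 : ∀ {α : Type} (B : Matrix (Fin m) α ℝ), X * (Xp * (X * B)) = X * B := by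
    intro α B
    rw [← Matrix.mul_assoc, ← Matrix.mul_assoc, h1]
  have l7 : ∀ {α : Type} (B : Matrix (Fin d₂) α ℝ),
      Y * (Xp * (X * (Yᵀ * B))) = U * (Λ * (Uᵀ * B)) := by
    intro α B
    rw [← Matrix.mul_assoc, ← Matrix.mul_assoc, ← Matrix.mul_assoc, hSVD,
      Matrix.mul_assoc, Matrix.mul_assoc]
  have l8 : ∀ {α : Type} (B : Matrix (Fin d₁) α ℝ),
      V * (Vᵀ * (Λ * (V * B))) = Λ * (V * B) := by
    intro α B
    rw [← Matrix.mul_assoc, ← Matrix.mul_assoc, ← Matrix.mul_assoc, hblock,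
      Matrix.mul_assoc]
  constructor
  · simp only [Matrix.transpose_mul, Matrix.transpose_transpose, Matrix.sub_mul,
      Matrix.mul_sub, Matrix.mul_assoc, l1, l2, l3, hXX]
    simp
  · simp only [Matrix.transpose_mul, Matrix.transpose_transpose, Matrix.sub_mul,
      Matrix.mul_sub, Matrix.mul_assoc, l1, l2, l5, l6, l7, l8, l3]
    simp
end
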